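/- Let ρ, σ be n×n density matrices (positive semidefinite with trace 1), and set P := (tr(ρ^{1/2}·σ^{1/2}))². Then 1 − √P ≤ (1/2)·‖ρ − σ‖₁ ≤ √(1 − P), where ‖·‖₁ denotes the trace norm. -/

import Mathlib

open scoped Classical ComplexOrder Matrix

/-- The positive semidefinite square root of a positive semidefinite matrix
(junk value `0` if the matrix is not positive semidefinite). -/
noncomputable def msqrt {n : Type*} [Fintype n] [DecidableEq n]
    (A : Matrix n n ℂ) : Matrix n n ℂ :=
  if h : A.PosSemidef then
    (h.1.eigenvectorUnitary : Matrix n n ℂ) * Matrix.diagonal ((↑) ∘ (√·) ∘ h.1.eigenvalues) *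
      (star h.1.eigenvectorUnitary : Matrix n n ℂ)
  else 0

/-- The Hilbert-Schmidt (Frobenius) norm of a matrix. -/
noncomputable def frob {n : Type*} [Fintype n]
    (M : Matrix n n ℂ) : ℝ :=
  Real.sqrt (∑ i, ∑ j, ‖M i j‖ ^ 2)

/-- `η(A,B) = ‖√(1−A)·√B − √A·√(1−B)‖₂`. -/
noncomputable def eta {n : Type*} [Fintype n] [DecidableEq n]
    (A B : Matrix n n ℂ) : ℝ :=
  frob (msqrt (1 - A) * msqrt B - msqrt A * msqrt (1 - B))

/-- The trace norm `‖M‖₁ = tr √(M†M)` of a matrix. -/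
noncomputable def traceNorm {n : Type*} [Fintype n] [DecidableEq n]
    (M : Matrix n n ℂ) : ℝ :=
  (msqrt (Mᴴ * M)).trace.re

namespace PS
open Matrix

set_option linter.unusedSectionVars false

variable {n : Type*} [Fintype n] [DecidableEq n]
variable {H : Matrix n n ℂ}

noncomputable def fc (hH : H.IsHermitian) (f : ℝ → ℝ) : Matrix n n ℂ :=
  (hH.eigenvectorUnitary : Matrix n n ℂ) *
    Matrix.diagonal (fun i => (f (hH.eigenvalues i) : ℂ)) *
    star (hH.eigenvectorUnitary : Matrix n n ℂ)

lemma star_mul_self_eigen (hH : H.IsHermitian) :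
    star (hH.eigenvectorUnitary : Matrix n n ℂ) * (hH.eigenvectorUnitary : Matrix n n ℂ) = 1 :=
  Unitary.coe_star_mul_self _

lemma mul_star_self_eigen (hH : H.IsHermitian) :
    (hH.eigenvectorUnitary : Matrix n n ℂ) * star (hH.eigenvectorUnitary : Matrix n n ℂ) = 1 :=
  Unitary.coe_mul_star_self _

lemma fc_mul (hH : H.IsHermitian) (f g : ℝ → ℝ) :
    fc hH f * fc hH g = fc hH (fun x => f x * g x) := by
  unfold fc
  set U := (hH.eigenvectorUnitary : Matrix n n ℂ)
  simp only [mul_assoc]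
  rw [← mul_assoc (star U) U, star_mul_self_eigen hH, one_mul,
    ← mul_assoc (Matrix.diagonal _) (Matrix.diagonal _), diagonal_mul_diagonal]
  congr 2
  ext i
  push_cast
  ring

lemma fc_congr (hH : H.IsHermitian) {f g : ℝ → ℝ} (h : ∀ x, f x = g x) :
    fc hH f = fc hH g := by
  have : f = g := funext h
  rw [this]

lemma fc_id (hH : H.IsHermitian) : fc hH (fun x => x) = H := by
  conv_rhs => rw [hH.spectral_theorem]
  rfl

lemma fc_one (hH : H.IsHermitian) : fc hH (fun _ => 1) = 1 := by
  unfold fc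
  simp [mul_star_self_eigen hH]

lemma fc_zero (hH : H.IsHermitian) : fc hH (fun _ => 0) = 0 := by
  unfold fc
  simp

lemma fc_sub (hH : H.IsHermitian) (f g : ℝ → ℝ) :
    fc hH f - fc hH g = fc hH (fun x => f x - g x) := by
  unfold fc
  rw [← sub_mul, ← mul_sub]
  congr 2
  ext i j
  rcases eq_or_ne i j with h | h
  · subst h; simp
  · simp [h]

lemma fc_add (hH : H.IsHermitian) (f g : ℝ → ℝ) :
    fc hH f + fc hH g = fc hH (fun x => f x + g x) := by
  unfold fc
  rw [← add_mul, ← mul_add]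
  congr 2
  ext i j
  rcases eq_or_ne i j with h | h
  · subst h; simp
  · simp [h]

lemma fc_herm (hH : H.IsHermitian) (f : ℝ → ℝ) : (fc hH f).IsHermitian := by
  unfold fc
  set U := (hH.eigenvectorUnitary : Matrix n n ℂ)
  unfold Matrix.IsHermitian
  rw [conjTranspose_mul, conjTranspose_mul, diagonal_conjTranspose, star_eq_conjTranspose,
    conjTranspose_conjTranspose, mul_assoc]
  congr 2
  ext i j
  simp [Pi.star_def]

lemma fc_posSemidef (hH : H.IsHermitian) {f : ℝ → ℝ} (hf : ∀ x, 0 ≤ f x) :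
    (fc hH f).PosSemidef := by
  unfold fc
  have hD : (Matrix.diagonal (fun i => ((f (hH.eigenvalues i) : ℝ) : ℂ))).PosSemidef := by
    refine PosSemidef.diagonal fun i => ?_
    simp only [Pi.zero_apply]
    rw [Complex.zero_le_real]
    exact hf _
  rw [star_eq_conjTranspose]
  exact hD.mul_mul_conjTranspose_same _

lemma fc_mul_left (hH : H.IsHermitian) (f : ℝ → ℝ) :
    H * fc hH f = fc hH (fun x => x * f x) := by
  nth_rewrite 1 [← fc_id hH]
  rw [fc_mul]

lemma fc_mul_right (hH : H.IsHermitian) (f : ℝ → ℝ) :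
    fc hH f * H = fc hH (fun x => f x * x) := by
  nth_rewrite 2 [← fc_id hH]
  rw [fc_mul]

lemma trace_psd_nonneg {M : Matrix n n ℂ} (hM : M.PosSemidef) : 0 ≤ M.trace := by
  rw [Matrix.trace]
  refine Finset.sum_nonneg fun i _ => ?_
  have := hM.2 (Finsupp.single i 1)
  simpa [Matrix.diag, dotProduct, mulVec, Pi.single_apply, Finset.sum_ite_eq,
    Finsupp.sum_single_index] using this

lemma fc_congr_eig (hH : H.IsHermitian) {f g : ℝ → ℝ}
    (h : ∀ i, f (hH.eigenvalues i) = g (hH.eigenvalues i)) : fc hH f = fc hH g := by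
  unfold fc
  rw [show (fun i => (f (hH.eigenvalues i) : ℂ)) = fun i => (g (hH.eigenvalues i) : ℂ) from
    funext fun i => by rw [h i]]

lemma msqrt_eq_fc {X : Matrix n n ℂ} (hX : X.PosSemidef) : msqrt X = fc hX.1 Real.sqrt := by
  unfold msqrt fc
  rw [dif_pos hX]
  rfl

lemma msqrt_psd {X : Matrix n n ℂ} (hX : X.PosSemidef) : (msqrt X).PosSemidef := by
  rw [msqrt_eq_fc hX]
  exact fc_posSemidef _ Real.sqrt_nonneg

lemma msqrt_mul_self {X : Matrix n n ℂ} (hX : X.PosSemidef) : msqrt X * msqrt X = X := by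
  rw [msqrt_eq_fc hX, fc_mul]
  conv_rhs => rw [← fc_id hX.1]
  exact fc_congr_eig hX.1 fun i => Real.mul_self_sqrt (hX.eigenvalues_nonneg i)

lemma trace_mul_psd_nonneg {X Y : Matrix n n ℂ} (hX : X.PosSemidef) (hY : Y.PosSemidef) :
    0 ≤ (X * Y).trace := by
  have hs := msqrt_psd hX
  have h2 : (msqrt X * Y * msqrt X).PosSemidef := by
    have := hY.mul_mul_conjTranspose_same (msqrt X)
    rwa [hs.1] at this
  calc (0:ℂ) ≤ (msqrt X * Y * msqrt X).trace := trace_psd_nonneg h2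
    _ = (X * Y).trace := by rw [trace_mul_cycle, msqrt_mul_self hX]

lemma re_le_re_of_nonneg_sub {z w : ℂ} (h : 0 ≤ w - z) : z.re ≤ w.re := by
  rw [Complex.le_def] at h
  simp only [Complex.zero_re, Complex.sub_re] at h
  linarith [h.1]

lemma frob_sq (X : Matrix n n ℂ) : ((Xᴴ * X).trace).re = ∑ i, ∑ j, ‖X i j‖ ^ 2 := by
  rw [Matrix.trace, Complex.re_sum, Finset.sum_comm]
  refine Finset.sum_congr rfl fun j _ => ?_
  simp only [Matrix.diag, Matrix.mul_apply, Matrix.conjTranspose_apply, Complex.re_sum]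
  refine Finset.sum_congr rfl fun i _ => ?_
  rw [Complex.star_def, Complex.mul_re]
  simp only [Complex.conj_re, Complex.conj_im, Complex.sq_norm,
    Complex.normSq_apply]
  ring

lemma frob_eq_sqrt_trace (X : Matrix n n ℂ) :
    frob X = Real.sqrt (((Xᴴ * X).trace).re) := by
  rw [frob, frob_sq]

lemma frob_nonneg (X : Matrix n n ℂ) : 0 ≤ frob X := Real.sqrt_nonneg _

lemma trace_re_le_frob_mul_frob (X Y : Matrix n n ℂ) :
    ((X * Y).trace).re ≤ frob X * frob Y := by
  have h1 : ((X * Y).trace).re = ∑ p : n × n, (X p.1 p.2 * Y p.2 p.1).re := by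
    rw [Matrix.trace, Complex.re_sum, Fintype.sum_prod_type]
    refine Finset.sum_congr rfl fun i _ => ?_
    simp [Matrix.diag, Matrix.mul_apply, Complex.re_sum]
  set a : n × n → ℝ := fun p => ‖X p.1 p.2‖ with ha
  set b : n × n → ℝ := fun p => ‖Y p.2 p.1‖ with hb
  have h2 : ((X * Y).trace).re ≤ ∑ p : n × n, a p * b p := by
    rw [h1]
    refine Finset.sum_le_sum fun p _ => ?_
    calc (X p.1 p.2 * Y p.2 p.1).re ≤ ‖X p.1 p.2 * Y p.2 p.1‖ := Complex.re_le_norm _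
      _ = a p * b p := norm_mul _ _
  have hX2 : frob X = Real.sqrt (∑ p : n × n, a p ^ 2) := by
    rw [frob, Fintype.sum_prod_type]
  have hY2 : frob Y = Real.sqrt (∑ p : n × n, b p ^ 2) := by
    have hswap : ∑ p : n × n, b p ^ 2 = ∑ p : n × n, ‖Y p.1 p.2‖ ^ 2 :=
      Fintype.sum_equiv (Equiv.prodComm n n) _ _ (fun p => rfl)
    rw [frob, hswap, Fintype.sum_prod_type]
  have CS := Finset.sum_mul_sq_le_sq_mul_sq Finset.univ a b
  have hab : 0 ≤ ∑ p : n × n, a p * b p :=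
    Finset.sum_nonneg fun p _ => mul_nonneg (norm_nonneg _) (norm_nonneg _)
  refine h2.trans ?_
  rw [hX2, hY2, ← Real.sqrt_mul (Finset.sum_nonneg fun p _ => sq_nonneg _)]
  rw [← Real.sqrt_sq hab]
  exact Real.sqrt_le_sqrt CS

lemma frob_mul_left_le {R X : Matrix n n ℂ} (hR : R.IsHermitian)
    (h1 : (1 - R * R).PosSemidef) : frob (R * X) ≤ frob X := by
  rw [frob_eq_sqrt_trace, frob_eq_sqrt_trace]
  apply Real.sqrt_le_sqrt
  apply re_le_re_of_nonneg_sub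
  have e1 : ((R * X)ᴴ * (R * X)).trace = (R * R * (X * Xᴴ)).trace := by
    rw [conjTranspose_mul, hR.eq,
      show Xᴴ * R * (R * X) = Xᴴ * (R * R * X) by noncomm_ring, trace_mul_comm,
      show R * R * X * Xᴴ = R * R * (X * Xᴴ) by noncomm_ring]
  have h2 := trace_mul_psd_nonneg h1 (posSemidef_self_mul_conjTranspose X)
  rw [sub_mul, one_mul, trace_sub] at h2
  rw [e1, trace_mul_comm Xᴴ X]
  exact h2

lemma frob_mul_right_le {R X : Matrix n n ℂ} (hR : R.IsHermitian)
    (h1 : (1 - R * R).PosSemidef) : frob (X * R) ≤ frob X := by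
  rw [frob_eq_sqrt_trace, frob_eq_sqrt_trace]
  apply Real.sqrt_le_sqrt
  apply re_le_re_of_nonneg_sub
  have e1 : ((X * R)ᴴ * (X * R)).trace = (R * R * (Xᴴ * X)).trace := by
    rw [conjTranspose_mul, hR.eq,
      show R * Xᴴ * (X * R) = R * (Xᴴ * X) * R by noncomm_ring, trace_mul_cycle,
      show R * R * (Xᴴ * X) = R * R * (Xᴴ * X) by rfl]
  have h2 := trace_mul_psd_nonneg h1 (posSemidef_conjTranspose_mul_self X)
  rw [sub_mul, one_mul, trace_sub] at h2
  rw [e1]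
  exact h2

end PS

namespace PS
open Matrix
set_option linter.unusedSectionVars false
variable {n : Type*} [Fintype n] [DecidableEq n]

lemma msqrt_eq {X Y : Matrix n n ℂ} (hX : X.PosSemidef) (hXY : X * X = Y) :
    msqrt Y = X := by
  have hY : Y.PosSemidef := by
    rw [← hXY]
    nth_rewrite 1 [← hX.1.eq]
    exact posSemidef_conjTranspose_mul_self X
  have e1 : msqrt Y = cfc Real.sqrt Y := by
    rw [msqrt_eq_fc hY, hY.1.cfc_eq, IsHermitian.cfc, Unitary.conjStarAlgAut_apply]
    rfl
  have hXs : IsSelfAdjoint X := hX.1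
  have e2 : X * X = cfc (fun x : ℝ => x * x) X := by
    rw [cfc_mul (fun x : ℝ => x) (fun x : ℝ => x) X, cfc_id' ℝ X]
  rw [e1, ← hXY, e2, ← cfc_comp Real.sqrt (fun x : ℝ => x * x) X]
  conv_rhs => rw [← cfc_id' ℝ X]
  apply cfc_congr
  intro x hx
  have h0 : 0 ≤ x := by
    obtain ⟨i, rfl⟩ := hX.1.spectrum_real_eq_range_eigenvalues ▸ hx
    exact hX.eigenvalues_nonneg i
  simp [Real.sqrt_mul_self h0]

end PS

open Matrix PS in
set_option maxHeartbeats 4000000 in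
theorem powers_stormer_fidelity_bounds {n : ℕ}
    (ρ σ : Matrix (Fin n) (Fin n) ℂ)
    (hρ : ρ.PosSemidef) (hρ1 : ρ.trace = 1)
    (hσ : σ.PosSemidef) (hσ1 : σ.trace = 1)
    (P : ℝ) (hP : P = ((msqrt ρ * msqrt σ).trace.re) ^ 2) :
    1 - Real.sqrt P ≤ (1 / 2) * traceNorm (ρ - σ) ∧
      (1 / 2) * traceNorm (ρ - σ) ≤ Real.sqrt (1 - P) := by
  classical
  -- square roots
  have hmρ : msqrt ρ = PS.fc hρ.1 Real.sqrt := msqrt_eq_fc hρ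
  have hmσ : msqrt σ = PS.fc hσ.1 Real.sqrt := msqrt_eq_fc hσ
  set A := PS.fc hρ.1 Real.sqrt with hAdef
  set B := PS.fc hσ.1 Real.sqrt with hBdef
  have hAp : A.PosSemidef := hmρ ▸ msqrt_psd hρ
  have hBp : B.PosSemidef := hmσ ▸ msqrt_psd hσ
  have hA2 : A * A = ρ := hmρ ▸ msqrt_mul_self hρ
  have hB2 : B * B = σ := hmσ ▸ msqrt_mul_self hσ
  set C := A - B with hCdef
  set S := A + B with hSdef
  set M := ρ - σ with hMdef
  have hC : C.IsHermitian := hAp.1.sub hBp.1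
  have hS : S.IsHermitian := hAp.1.add hBp.1
  have hM : M.IsHermitian := hρ.1.sub hσ.1
  set t : ℝ := ((A * B).trace).re with htdef
  have hPt : P = t ^ 2 := by rw [hP, hmρ, hmσ]
  have ht0 : 0 ≤ t := by
    have h := trace_mul_psd_nonneg hAp hBp
    rw [Complex.le_def] at h
    simpa using h.1
  have htBA : (B * A).trace = (A * B).trace := Matrix.trace_mul_comm B A
  -- traces of C² and S²
  have hCC : C * C = ρ + σ - (A * B + B * A) := by
    rw [hCdef, show (A - B) * (A - B) = A * A + B * B - (A * B + B * A) by noncomm_ring,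
      hA2, hB2]
  have hSS : S * S = ρ + σ + (A * B + B * A) := by
    rw [hSdef, show (A + B) * (A + B) = A * A + B * B + (A * B + B * A) by noncomm_ring,
      hA2, hB2]
  have hCCtr : ((C * C).trace).re = 2 - 2 * t := by
    rw [hCC, trace_sub, trace_add, trace_add, hρ1, hσ1, htBA]
    simp only [Complex.sub_re, Complex.add_re, Complex.one_re, htdef]
    ring
  have hSStr : ((S * S).trace).re = 2 + 2 * t := by
    rw [hSS, trace_add, trace_add, trace_add, hρ1, hσ1, htBA]
    simp only [Complex.add_re, Complex.one_re, htdef]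
    ring
  have h2M : C * S + S * C = M + M := by
    rw [hCdef, hSdef, hMdef, show (A - B) * (A + B) + (A + B) * (A - B)
        = (A * A - B * B) + (A * A - B * B) by noncomm_ring, hA2, hB2]
  -- pointwise functions
  set pf : ℝ → ℝ := fun x => max x 0 with hpfdef
  set nf : ℝ → ℝ := fun x => max (-x) 0 with hnfdef
  set af : ℝ → ℝ := fun x => |x| with hafdef
  set sf : ℝ → ℝ := Real.sign with hsfdef
  have hpf0 : ∀ x, 0 ≤ pf x := fun x => le_max_right _ _
  have hnf0 : ∀ x, 0 ≤ nf x := fun x => le_max_right _ _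
  have haf0 : ∀ x, 0 ≤ af x := fun x => abs_nonneg _
  have hcase : ∀ x : ℝ, (pf x = x ∧ nf x = 0 ∧ af x = x) ∨
      (pf x = 0 ∧ nf x = -x ∧ af x = -x) := by
    intro x
    rcases le_total 0 x with h | h
    · exact Or.inl ⟨max_eq_left h, max_eq_right (neg_nonpos.mpr h), abs_of_nonneg h⟩
    · exact Or.inr ⟨max_eq_right h, max_eq_left (neg_nonneg.mpr h), abs_of_nonpos h⟩
  have hscase : ∀ x : ℝ, sf x * x = af x ∧ sf x * sf x ≤ 1 ∧ -1 ≤ sf x ∧ sf x ≤ 1 := by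
    intro x
    rcases lt_trichotomy x 0 with h | h | h
    · rw [hsfdef, Real.sign_of_neg h, hafdef]
      refine ⟨?_, by norm_num, by norm_num, by norm_num⟩
      simp [abs_of_neg h]
    · subst h; simp [hsfdef, hafdef]
    · rw [hsfdef, Real.sign_of_pos h, hafdef]
      refine ⟨?_, by norm_num, by norm_num, by norm_num⟩
      simp [abs_of_pos h]
  -- functional calculus matrices
  set Cp := PS.fc hC pf with hCpdef
  set Cn := PS.fc hC nf with hCndef
  set Cabs := PS.fc hC af with hCabsdef
  set RC := PS.fc hC sf with hRCdef
  set Mp := PS.fc hM pf with hMpdef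
  set Mn := PS.fc hM nf with hMndef
  set Mabs := PS.fc hM af with hMabsdef
  set RM := PS.fc hM sf with hRMdef
  have hCpPsd : Cp.PosSemidef := PS.fc_posSemidef hC hpf0
  have hCnPsd : Cn.PosSemidef := PS.fc_posSemidef hC hnf0
  have hMpPsd : Mp.PosSemidef := PS.fc_posSemidef hM hpf0
  have hMnPsd : Mn.PosSemidef := PS.fc_posSemidef hM hnf0
  -- fc identities
  have e_CCp : C * Cp = Cp * Cp := by
    rw [hCpdef, fc_mul_left hC pf, fc_mul hC pf pf]
    refine fc_congr hC fun x => ?_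
    rcases hcase x with ⟨h1, _, _⟩ | ⟨h1, _, _⟩ <;> rw [h1] <;> ring
  have e_CCn : C * Cn = -(Cn * Cn) := by
    have h0 : Cn * Cn + C * Cn = 0 := by
      rw [hCndef, fc_mul hC nf nf, fc_mul_left hC nf, fc_add, ← fc_zero hC]
      refine fc_congr hC fun x => ?_
      rcases hcase x with ⟨_, h2, _⟩ | ⟨_, h2, _⟩ <;> rw [h2] <;> ring
    exact eq_neg_of_add_eq_zero_right h0
  have e_CC : C * C = Cp * Cp + Cn * Cn := by
    rw [hCpdef, hCndef, fc_mul hC pf pf, fc_mul hC nf nf, fc_add]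
    conv_lhs => rw [← fc_id hC]
    rw [fc_mul]
    refine fc_congr hC fun x => ?_
    rcases hcase x with ⟨h1, h2, _⟩ | ⟨h1, h2, _⟩ <;> rw [h1, h2] <;> ring
  have e_Cpn : Cp + Cn = Cabs := by
    rw [hCpdef, hCndef, hCabsdef, fc_add]
    refine fc_congr hC fun x => ?_
    rcases hcase x with ⟨h1, h2, h3⟩ | ⟨h1, h2, h3⟩ <;> rw [h1, h2, h3] <;> ring
  have e_RC_C : RC * C = Cabs := by
    rw [hRCdef, hCabsdef, fc_mul_right hC sf]
    exact fc_congr hC fun x => (hscase x).1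
  have e_C_RC : C * RC = Cabs := by
    rw [hRCdef, hCabsdef, fc_mul_left hC sf]
    refine fc_congr hC fun x => ?_
    rw [mul_comm]
    exact (hscase x).1
  have e_MpMn : Mp - Mn = M := by
    rw [hMpdef, hMndef, fc_sub]
    rw [show (fun x => pf x - nf x) = fun x : ℝ => x from funext fun x => by
      rcases hcase x with ⟨h1, h2, _⟩ | ⟨h1, h2, _⟩ <;> rw [h1, h2] <;> ring]
    exact fc_id hM
  have e_Mabs : Mp + Mn = Mabs := by
    rw [hMpdef, hMndef, hMabsdef, fc_add]
    refine fc_congr hM fun x => ?_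
    rcases hcase x with ⟨h1, h2, h3⟩ | ⟨h1, h2, h3⟩ <;> rw [h1, h2, h3] <;> ring
  have e_RM_M : RM * M = Mabs := by
    rw [hRMdef, hMabsdef, fc_mul_right hM sf]
    exact fc_congr hM fun x => (hscase x).1
  have psd_1mRC : (1 - RC).PosSemidef := by
    rw [hRCdef, ← fc_one hC, fc_sub]
    exact fc_posSemidef hC fun x => by linarith [(hscase x).2.2.2]
  have psd_1pRC : (1 + RC).PosSemidef := by
    rw [hRCdef, ← fc_one hC, fc_add]
    exact fc_posSemidef hC fun x => by linarith [(hscase x).2.2.1]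
  have psd_1mRM2 : (1 - RM * RM).PosSemidef := by
    rw [hRMdef, fc_mul hM sf sf, ← fc_one hM, fc_sub]
    exact fc_posSemidef hM fun x => by linarith [(hscase x).2.1]
  -- trace norm of M
  have e_sqrtMM : msqrt (Mᴴ * M) = Mabs := by
    rw [hM.eq]
    refine msqrt_eq (fc_posSemidef hM haf0) ?_
    rw [hMabsdef, fc_mul]
    conv_rhs => rw [← fc_id hM]
    rw [fc_mul]
    refine fc_congr hM fun x => ?_
    rcases hcase x with ⟨_, _, h3⟩ | ⟨_, _, h3⟩ <;> rw [h3] <;> ring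
  have e_TN : traceNorm M = Mabs.trace.re := by
    rw [show traceNorm M = (msqrt (Mᴴ * M)).trace.re from rfl, e_sqrtMM]
  have hTN : traceNorm M = Mp.trace.re + Mn.trace.re := by
    rw [e_TN, ← e_Mabs, trace_add, Complex.add_re]
  -- lower bound chain
  have ineq1 : ((C * Cp).trace).re ≤ ((S * Cp).trace).re := by
    have hSmC : S - C = B + B := by rw [hSdef, hCdef]; abel
    have h : 0 ≤ ((S - C) * Cp).trace :=
      trace_mul_psd_nonneg (hSmC ▸ hBp.add hBp) hCpPsd
    rw [sub_mul, trace_sub] at h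
    exact re_le_re_of_nonneg_sub h
  have ineq2 : -(((C * Cn).trace).re) ≤ ((S * Cn).trace).re := by
    have hSpC : S + C = A + A := by rw [hSdef, hCdef]; abel
    have h : 0 ≤ ((S + C) * Cn).trace :=
      trace_mul_psd_nonneg (hSpC ▸ hAp.add hAp) hCnPsd
    rw [add_mul, trace_add] at h
    have h2 := re_le_re_of_nonneg_sub
      (show 0 ≤ (S * Cn).trace - -((C * Cn).trace) by rw [sub_neg_eq_add]; exact h)
    rw [Complex.neg_re] at h2
    linarith
  have keyL1 : ((C * C).trace).re ≤ ((S * Cabs).trace).re := by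
    have a1 : ((C * C).trace).re = ((C * Cp).trace).re - ((C * Cn).trace).re := by
      have hcn : (Cn * Cn).trace = -((C * Cn).trace) := by rw [e_CCn, trace_neg, neg_neg]
      rw [e_CC, trace_add, hcn, ← e_CCp, Complex.add_re, Complex.neg_re]
      ring
    have a2 : ((S * Cabs).trace).re = ((S * Cp).trace).re + ((S * Cn).trace).re := by
      rw [← e_Cpn, mul_add, trace_add, Complex.add_re]
    linarith
  have keyL2 : ((S * Cabs).trace).re = ((RC * M).trace).re := by
    have hh : (RC * M).trace + (RC * M).trace = (S * Cabs).trace + (S * Cabs).trace := by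
      rw [← trace_add, ← mul_add, ← h2M, mul_add, trace_add]
      congr 1
      · rw [← mul_assoc, e_RC_C, trace_mul_comm]
      · rw [← mul_assoc, trace_mul_cycle, e_C_RC, trace_mul_comm]
    have := congrArg Complex.re hh
    simp only [Complex.add_re] at this
    linarith
  have keyL3 : ((RC * M).trace).re ≤ Mp.trace.re + Mn.trace.re := by
    have b1 : ((RC * Mp).trace).re ≤ Mp.trace.re := by
      have h := trace_mul_psd_nonneg psd_1mRC hMpPsd
      rw [sub_mul, one_mul, trace_sub] at h
      exact re_le_re_of_nonneg_sub h
    have b2 : -(Mn.trace.re) ≤ ((RC * Mn).trace).re := by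
      have h := trace_mul_psd_nonneg psd_1pRC hMnPsd
      rw [add_mul, one_mul, trace_add] at h
      have h2 := re_le_re_of_nonneg_sub
        (show 0 ≤ (RC * Mn).trace - -(Mn.trace) by rw [sub_neg_eq_add, add_comm]; exact h)
      rw [Complex.neg_re] at h2
      linarith
    have b3 : ((RC * M).trace).re = ((RC * Mp).trace).re - ((RC * Mn).trace).re := by
      rw [← e_MpMn, mul_sub, trace_sub, Complex.sub_re]
    linarith
  have lower : 2 - 2 * t ≤ traceNorm M := by
    rw [hTN, ← hCCtr]
    linarith
  -- upper bound chain
  have hRMherm : RM.IsHermitian := by rw [hRMdef]; exact fc_herm hM sf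
  have u1 : ((RM * (C * S)).trace).re ≤ frob C * frob S := by
    rw [← mul_assoc]
    refine (trace_re_le_frob_mul_frob (RM * C) S).trans ?_
    exact mul_le_mul_of_nonneg_right (frob_mul_left_le hRMherm psd_1mRM2) (frob_nonneg S)
  have u2 : ((RM * (S * C)).trace).re ≤ frob C * frob S := by
    rw [← mul_assoc, trace_mul_cycle]
    refine (trace_re_le_frob_mul_frob (C * RM) S).trans ?_
    exact mul_le_mul_of_nonneg_right (frob_mul_right_le hRMherm psd_1mRM2) (frob_nonneg S)
  have upper : traceNorm M + traceNorm M ≤ 2 * (frob C * frob S) := by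
    have hh : (RM * M).trace + (RM * M).trace
        = (RM * (C * S)).trace + (RM * (S * C)).trace := by
      rw [← trace_add, ← mul_add, ← h2M, mul_add, trace_add]
    have hre := congrArg Complex.re hh
    simp only [Complex.add_re] at hre
    have e_TN2 : traceNorm M = ((RM * M).trace).re := by rw [e_TN, ← e_RM_M]
    rw [e_TN2]
    linarith
  -- frobenius values
  have fC : frob C = Real.sqrt (2 - 2 * t) := by
    rw [frob_eq_sqrt_trace]
    conv_lhs => rw [hC.eq]
    rw [hCCtr]
  have fS : frob S = Real.sqrt (2 + 2 * t) := by
    rw [frob_eq_sqrt_trace]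
    conv_lhs => rw [hS.eq]
    rw [hSStr]
  have h2t : 0 ≤ 2 - 2 * t := by
    rw [← hCCtr]
    have hcc : C * C = Cᴴ * C := by rw [hC.eq]
    rw [hcc, frob_sq]
    positivity
  have hfCfS : frob C * frob S = 2 * Real.sqrt (1 - t ^ 2) := by
    rw [fC, fS, ← Real.sqrt_mul h2t,
      show (2 - 2 * t) * (2 + 2 * t) = 4 * (1 - t ^ 2) by ring,
      Real.sqrt_mul (by norm_num : (0:ℝ) ≤ 4),
      show Real.sqrt 4 = 2 by
        rw [show (4:ℝ) = 2 ^ 2 by norm_num, Real.sqrt_sq (by norm_num : (0:ℝ) ≤ 2)]]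
  constructor
  · rw [hPt, Real.sqrt_sq ht0]
    linarith
  · rw [hPt]
    have : traceNorm M ≤ 2 * Real.sqrt (1 - t ^ 2) := by
      rw [← hfCfS]; linarith
    linarith
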